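/- arXiv:math/0411541 — 2 statements merged into one kernel-verified Lean document; each statement's English description precedes it below -/
import Mathlib

section
/- Let g : M(L) → M(L') be an additive map preserving the Mukai pairings (⟨g v, g w⟩ = ⟨v, w⟩ for all v, w), and suppose g(0,0,1) = (0,0,1). Write g(1,0,0) = (r, b, s). Then r = 1 and 2s = ⟨b,b⟩; in other words g(1,0,0) = exp(b) = (1, b, ⟨b,b⟩/2) for some b ∈ L'. -/
/-- The Mukai pairing on the Mukai lattice `M(L) = ℤ × L × ℤ`:
`⟨(r,ℓ,s),(r',ℓ',s')⟩ = ⟨ℓ,ℓ'⟩ - r·s' - r'·s`. -/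
def mukaiPair {L : Type*} [AddCommGroup L] [Module ℤ L]
    (B : L →ₗ[ℤ] L →ₗ[ℤ] ℤ) (v w : ℤ × L × ℤ) : ℤ :=
  B v.2.1 w.2.1 - v.1 * w.2.2 - w.1 * v.2.2

/-- An additive, Mukai-pairing-preserving map `g : M(L) → M(L')` with
`g(0,0,1) = (0,0,1)` sends `(1,0,0)` to a vector of the form
`exp(b) = (1, b, ⟨b,b⟩/2)`: writing `g(1,0,0) = (r, b, s)` one has
`r = 1` and `2s = ⟨b,b⟩`. -/
theorem isometry_exp_image {L L' : Type*}
    [AddCommGroup L] [Module ℤ L] [Module.Free ℤ L]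
    [AddCommGroup L'] [Module ℤ L'] [Module.Free ℤ L']
    (B : L →ₗ[ℤ] L →ₗ[ℤ] ℤ) (B' : L' →ₗ[ℤ] L' →ₗ[ℤ] ℤ)
    (hsymm : ∀ x y : L, B x y = B y x)
    (heven : ∀ x : L, ∃ k : ℤ, B x x = 2 * k)
    (hsymm' : ∀ x y : L', B' x y = B' y x)
    (heven' : ∀ x : L', ∃ k : ℤ, B' x x = 2 * k)
    (g : ℤ × L × ℤ → ℤ × L' × ℤ)
    (hadd : ∀ v w : ℤ × L × ℤ, g (v + w) = g v + g w)
    (hiso : ∀ v w : ℤ × L × ℤ, mukaiPair B' (g v) (g w) = mukaiPair B v w)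
    (hpt : g (0, 0, 1) = (0, 0, 1)) :
    (g (1, 0, 0)).1 = 1 ∧
    2 * (g (1, 0, 0)).2.2 = B' (g (1, 0, 0)).2.1 (g (1, 0, 0)).2.1 := by
  have h1 := hiso (1, 0, 0) (0, 0, 1)
  have h2 := hiso (1, 0, 0) (1, 0, 0)
  rw [hpt] at h1
  simp [mukaiPair] at h1 h2
  refine ⟨h1, ?_⟩
  have h1' : (g (1, 0, 0)).1 = 1 := h1
  have h2' : (B' (g (1, 0, 0)).2.1) (g (1, 0, 0)).2.1 - (g (1, 0, 0)).1 * (g (1, 0, 0)).2.2 - (g (1, 0, 0)).1 * (g (1, 0, 0)).2.2 = 0 := h2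
  rw [h1'] at h2'
  linarith
end

section
/- Let g : M(L) → M(L') be an additive bijection preserving the Mukai pairings with g(0,0,1) = (0,0,1). Then there exists b ∈ L' such that the composition h := (multiplication by exp(−b)) ∘ g is an additive bijection preserving the Mukai pairings which satisfies h(0,0,1) = (0,0,1) and h(1,0,0) = (1,0,0). (This is the reduction carried out in the 2nd step of the proof of the main theorem: after composing with the isometry exp(−b), which is induced by a Fourier–Mukai equivalence, one may assume the isometry fixes both (1,0,0) and (0,0,1).) -/
/-- The truncated cup product on `M(L) = ℤ × L × ℤ`:
`(r,c,s)·(r',c',s') = (r·r', r·c' + r'·c, r·s' + r'·s + ⟨c,c'⟩)`. -/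
def cup {L : Type*} [AddCommGroup L] [Module ℤ L]
    (B : L →ₗ[ℤ] L →ₗ[ℤ] ℤ) (v w : ℤ × L × ℤ) : ℤ × L × ℤ :=
  (v.1 * w.1, v.1 • w.2.1 + w.1 • v.2.1, v.1 * w.2.2 + w.1 * v.2.2 + B v.2.1 w.2.1)

/-- If `g : M(L) → M(L')` is an additive bijection preserving the Mukai pairings
with `g(0,0,1) = (0,0,1)`, then there is `b ∈ L'` such that the composition
`h := (multiplication by exp(-b)) ∘ g` is an additive bijection preserving the
Mukai pairings with `h(0,0,1) = (0,0,1)` and `h(1,0,0) = (1,0,0)`.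
Here `t` plays the role of `⟨b,b⟩/2 = ⟨-b,-b⟩/2` (an integer by evenness), so that
`exp(-b) = (1, -b, t)`. -/
theorem reduce_to_normalized_isometry {L L' : Type*}
    [AddCommGroup L] [Module ℤ L] [Module.Free ℤ L]
    [AddCommGroup L'] [Module ℤ L'] [Module.Free ℤ L']
    (B : L →ₗ[ℤ] L →ₗ[ℤ] ℤ) (B' : L' →ₗ[ℤ] L' →ₗ[ℤ] ℤ)
    (hsymm : ∀ x y : L, B x y = B y x)
    (heven : ∀ x : L, ∃ k : ℤ, B x x = 2 * k)
    (hsymm' : ∀ x y : L', B' x y = B' y x)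
    (heven' : ∀ x : L', ∃ k : ℤ, B' x x = 2 * k)
    (g : ℤ × L × ℤ → ℤ × L' × ℤ)
    (hbij : Function.Bijective g)
    (hadd : ∀ v w : ℤ × L × ℤ, g (v + w) = g v + g w)
    (hiso : ∀ v w : ℤ × L × ℤ, mukaiPair B' (g v) (g w) = mukaiPair B v w)
    (hpt : g (0, 0, 1) = (0, 0, 1)) :
    ∃ (b : L') (t : ℤ), 2 * t = B' b b ∧
      (Function.Bijective (fun v : ℤ × L × ℤ => cup B' (g v) (1, -b, t)) ∧
       (∀ v w : ℤ × L × ℤ,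
         cup B' (g (v + w)) (1, -b, t) =
           cup B' (g v) (1, -b, t) + cup B' (g w) (1, -b, t)) ∧
       (∀ v w : ℤ × L × ℤ,
         mukaiPair B' (cup B' (g v) (1, -b, t)) (cup B' (g w) (1, -b, t)) =
           mukaiPair B v w) ∧
       cup B' (g (0, 0, 1)) (1, -b, t) = (0, 0, 1) ∧
       cup B' (g (1, 0, 0)) (1, -b, t) = (1, 0, 0)) := by
  set p := g (1, 0, 0) with hp
  obtain ⟨r, b, t⟩ := p
  have h1 : mukaiPair B' (g (1,0,0)) (g (0,0,1)) = mukaiPair B (1,0,0) (0,0,1) := hiso _ _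
  have h2 : mukaiPair B' (g (1,0,0)) (g (1,0,0)) = mukaiPair B (1,0,0) (1,0,0) := hiso _ _
  rw [hpt, ← hp] at h1
  rw [← hp] at h2
  simp [mukaiPair] at h1 h2
  have hr : r = 1 := by linarith
  subst hr
  have ht : 2 * t = B' b b := by linarith
  have hexp : ∀ (e : L') (u : ℤ × L' × ℤ),
      cup B' (cup B' u (1, -b, t)) (1, b, t) = u ∧
      cup B' (cup B' u (1, b, t)) (1, -b, t) = u := by
    intro e u
    obtain ⟨r', c, s⟩ := u
    constructor <;>
    · refine Prod.ext ?_ (Prod.ext ?_ ?_) <;>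
        simp only [cup, one_smul, smul_neg, map_add, map_neg, LinearMap.map_smul_of_tower,
          LinearMap.add_apply, LinearMap.neg_apply, LinearMap.smul_apply, smul_eq_mul]
      · ring
      · simp only [add_zsmul, one_nsmul, one_zsmul, zsmul_neg, neg_zsmul, smul_add, mul_one,
          one_mul, smul_smul]
        abel
      · rw [hsymm' c b]; linear_combination r' * ht
  refine ⟨b, t, ht, ?_, ?_, ?_, ?_, ?_⟩
  · have hb : Function.Bijective (fun u : ℤ × L' × ℤ => cup B' u (1, -b, t)) :=
      Function.bijective_iff_has_inverse.2
        ⟨fun u => cup B' u (1, b, t), fun u => (hexp b u).1, fun u => (hexp b u).2⟩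
    exact hb.comp hbij
  · intro v w
    rw [hadd]
    obtain ⟨r1, c1, s1⟩ := g v
    obtain ⟨r2, c2, s2⟩ := g w
    refine Prod.ext ?_ (Prod.ext ?_ ?_) <;>
      simp only [cup, Prod.mk_add_mk, one_smul, smul_neg, add_smul, map_add, map_neg,
        LinearMap.map_smul_of_tower, LinearMap.add_apply, LinearMap.neg_apply,
        LinearMap.smul_apply, smul_eq_mul]
    · ring
    · simp only [add_zsmul, one_nsmul, one_zsmul, zsmul_neg, neg_zsmul]; abel
    · ring
  · intro v w
    rw [← hiso v w]
    obtain ⟨r1, c1, s1⟩ := g v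
    obtain ⟨r2, c2, s2⟩ := g w
    simp only [cup, mukaiPair, one_smul, smul_neg, map_add, map_neg,
      LinearMap.map_smul_of_tower, LinearMap.add_apply, LinearMap.neg_apply,
      LinearMap.smul_apply, smul_eq_mul]
    rw [hsymm' c1 b, hsymm' c2 b]
    linear_combination (-(r1*r2)) * ht
  · rw [hpt]
    refine Prod.ext ?_ (Prod.ext ?_ ?_) <;>
      simp [cup]
  · refine Prod.ext ?_ (Prod.ext ?_ ?_) <;>
      simp only [cup, one_nsmul, one_zsmul, zsmul_neg, neg_zsmul, map_neg,
        LinearMap.neg_apply, smul_eq_mul]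
    · ring
    · abel
    · linarith [ht]
end
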